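/- arXiv:2310.11886 — 2 statements merged into one kernel-verified Lean document; each statement's English description precedes it below -/
import Mathlib

section
/- Let (Ω, μ) be a probability space, ε, δ ∈ (0,1), E a finite index set, c : E → ℝ with c(e) ≥ 0 for all e and C = Σ_{e∈E} c(e) > 0, and let p ∈ (0,1) satisfy p ≥ 1/(1 + δε²). Let (X_e)_{e∈E} be mutually independent random variables, each taking values in {0,1} with μ(X_e = 1) = p, and define Ĉ = (1/p) · Σ_{e∈E} c(e) · X_e. Then μ( |Ĉ − C| ≥ εC ) ≤ δ, i.e., Ĉ is an (ε, δ)-approximation of C. -/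
open MeasureTheory ProbabilityTheory

/-!
Each sampled indicator `X e` is Bernoulli(p), so the estimator `Ĉ = (1/p) ∑ c e X e` has mean
`C` and, by independence, variance `(1 - p)/p · ∑ c e ^ 2 ≤ (1 - p)/p · C ^ 2`. The lower bound on
`p` is exactly `(1 - p)/p ≤ δ ε²`, so Chebyshev's inequality bounds `μ (|Ĉ - C| ≥ εC)` by `δ`.
-/

open scoped ENNReal

lemma eq_indicator_of_forall_eq_zero_or_one {Ω : Type*} {X : Ω → ℝ}
    (h01 : ∀ ω, X ω = 0 ∨ X ω = 1) : X = {ω | X ω = 1}.indicator fun _ => 1 := by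
  funext ω
  rcases h01 ω with h | h <;> simp [Set.indicator, h]

section ZeroOneValued

variable {Ω : Type*} [MeasurableSpace Ω] {μ : Measure Ω} {X : Ω → ℝ}

lemma memLp_of_forall_eq_zero_or_one [IsFiniteMeasure μ] (hX : Measurable X)
    (h01 : ∀ ω, X ω = 0 ∨ X ω = 1) (q : ℝ≥0∞) : MemLp X q μ :=
  MemLp.of_bound hX.aestronglyMeasurable 1 <| Filter.Eventually.of_forall fun ω => by
    rcases h01 ω with h | h <;> simp [h]

lemma integral_eq_measureReal_of_forall_eq_zero_or_one (hX : Measurable X)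
    (h01 : ∀ ω, X ω = 0 ∨ X ω = 1) : μ[X] = μ.real {ω | X ω = 1} := by
  conv_lhs => rw [eq_indicator_of_forall_eq_zero_or_one h01]
  have hs : MeasurableSet {ω | X ω = 1} := hX (measurableSet_singleton 1)
  rw [integral_indicator_const _ hs, smul_eq_mul, mul_one]

lemma variance_of_forall_eq_zero_or_one [IsProbabilityMeasure μ] (hX : Measurable X)
    (h01 : ∀ ω, X ω = 0 ∨ X ω = 1) :
    Var[X; μ] = μ.real {ω | X ω = 1} * (1 - μ.real {ω | X ω = 1}) := by
  have hsq : X ^ 2 = X := by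
    funext ω
    rcases h01 ω with h | h <;> simp [h]
  rw [variance_eq_sub (memLp_of_forall_eq_zero_or_one hX h01 2), hsq,
    integral_eq_measureReal_of_forall_eq_zero_or_one hX h01]
  ring

end ZeroOneValued

section SamplingEstimator

variable {Ω E : Type*} [Fintype E] {p : ℝ} {c : E → ℝ} {X : E → Ω → ℝ}

noncomputable def samplingEstimator (p : ℝ) (c : E → ℝ) (X : E → Ω → ℝ) (ω : Ω) : ℝ :=
  (1 / p) * ∑ e, c e * X e ω

lemma samplingEstimator_eq_smul_sum (p : ℝ) (c : E → ℝ) (X : E → Ω → ℝ) :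
    samplingEstimator p c X = (1 / p) • ∑ e, c e • X e := by
  funext ω
  simp [samplingEstimator]

variable [MeasurableSpace Ω] {μ : Measure Ω}

lemma memLp_samplingEstimator {q : ℝ≥0∞} (hX : ∀ e, MemLp (X e) q μ) :
    MemLp (samplingEstimator p c X) q μ := by
  rw [samplingEstimator_eq_smul_sum]
  exact (memLp_finsetSum' _ fun e _ => (hX e).const_smul (c e)).const_smul _

lemma integral_samplingEstimator (hp : p ≠ 0) (hX : ∀ e, Integrable (X e) μ)
    (hmean : ∀ e, μ[X e] = p) : μ[samplingEstimator p c X] = ∑ e, c e := by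
  simp only [samplingEstimator]
  rw [integral_const_mul, integral_finsetSum _ fun e _ => (hX e).const_mul (c e)]
  simp only [integral_const_mul, hmean, ← Finset.sum_mul]
  field_simp

lemma variance_samplingEstimator (hp : p ≠ 0) (hX : ∀ e, MemLp (X e) 2 μ)
    (hvar : ∀ e, Var[X e; μ] = p * (1 - p)) (hindep : Pairwise fun i j => X i ⟂ᵢ[μ] X j) :
    Var[samplingEstimator p c X; μ] = (1 - p) / p * ∑ e, c e ^ 2 := by
  have hindep' : Set.Pairwise (Finset.univ : Finset E) fun i j =>
      (c i • X i) ⟂ᵢ[μ] (c j • X j) := fun i _ j _ hij =>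
      (hindep hij).comp (measurable_const_mul (c i)) (measurable_const_mul (c j))
  rw [samplingEstimator_eq_smul_sum, variance_smul,
    IndepFun.variance_sum (fun e _ => (hX e).const_smul (c e)) hindep']
  simp only [variance_smul, hvar, Finset.mul_sum]
  refine Finset.sum_congr rfl fun e _ => ?_
  field_simp

end SamplingEstimator

lemma one_sub_div_le_of_one_div_one_add_le {p a : ℝ} (hp : 0 < p) (ha : 0 ≤ a)
    (h : 1 / (1 + a) ≤ p) : (1 - p) / p ≤ a := by
  rw [div_le_iff₀ (by positivity)] at h
  rw [div_le_iff₀ hp]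
  linarith

/-- Theorem 4.3, first part: with sampling probability `p ≥ 1/(1 + δ ε²)`, the
edge-centric sampling estimator is an (ε, δ)-approximation of `C`. -/
theorem stmt_7 {Ω : Type*} [MeasurableSpace Ω] (μ : Measure Ω) [IsProbabilityMeasure μ]
    (ε δ : ℝ) (hε : ε ∈ Set.Ioo (0 : ℝ) 1) (hδ : δ ∈ Set.Ioo (0 : ℝ) 1)
    {E : Type*} [Fintype E] (c : E → ℝ) (hc : ∀ e, 0 ≤ c e)
    (C : ℝ) (hC : C = ∑ e, c e) (hCpos : 0 < C)
    (p : ℝ) (hp : p ∈ Set.Ioo (0 : ℝ) 1) (hplb : 1 / (1 + δ * ε ^ 2) ≤ p)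
    (X : E → Ω → ℝ) (hmeas : ∀ e, Measurable (X e))
    (hval : ∀ e ω, X e ω = 0 ∨ X e ω = 1)
    (hbern : ∀ e, μ {ω | X e ω = 1} = ENNReal.ofReal p)
    (hindep : iIndepFun X μ) :
    μ {ω | ε * C ≤ |(1 / p) * (∑ e, c e * X e ω) - C|} ≤ ENNReal.ofReal δ := by
  obtain ⟨hε0, -⟩ := hε
  obtain ⟨hδ0, -⟩ := hδ
  obtain ⟨hp0, -⟩ := hp
  have hεC : 0 < ε * C := mul_pos hε0 hCpos
  have hprob : ∀ e, μ.real {ω | X e ω = 1} = p := fun e => by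
    rw [measureReal_def, hbern, ENNReal.toReal_ofReal hp0.le]
  have hXmem : ∀ e, MemLp (X e) 2 μ := fun e =>
    memLp_of_forall_eq_zero_or_one (hmeas e) (hval e) 2
  have hmeanX : ∀ e, μ[X e] = p := fun e => by
    rw [integral_eq_measureReal_of_forall_eq_zero_or_one (hmeas e) (hval e), hprob]
  have hvarX : ∀ e, Var[X e; μ] = p * (1 - p) := fun e => by
    rw [variance_of_forall_eq_zero_or_one (hmeas e) (hval e), hprob]
  have hmean : μ[samplingEstimator p c X] = C := by
    rw [hC, integral_samplingEstimator hp0.ne' (fun e => (hXmem e).integrable one_le_two) hmeanX]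
  have hvar : Var[samplingEstimator p c X; μ] ≤ δ * (ε * C) ^ 2 := by
    rw [variance_samplingEstimator hp0.ne' hXmem hvarX fun i j hij => hindep.indepFun hij]
    calc (1 - p) / p * ∑ e, c e ^ 2 ≤ δ * ε ^ 2 * C ^ 2 := by
          gcongr
          · exact one_sub_div_le_of_one_div_one_add_le hp0 (mul_nonneg hδ0.le (sq_nonneg ε)) hplb
          · exact hC ▸ Finset.sum_sq_le_sq_sum_of_nonneg fun e _ => hc e
      _ = δ * (ε * C) ^ 2 := by ring
  calc μ {ω | ε * C ≤ |samplingEstimator p c X ω - C|}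
      ≤ ENNReal.ofReal (Var[samplingEstimator p c X; μ] / (ε * C) ^ 2) := by
        simpa only [hmean] using
          meas_ge_le_variance_div_sq (memLp_samplingEstimator (p := p) (c := c) hXmem) hεC
    _ ≤ ENNReal.ofReal δ := by
        gcongr
        rwa [div_le_iff₀ (pow_pos hεC 2)]
end

section
/- Let (Ω, μ) be a probability space, ε, δ ∈ (0,1), E a finite set with |E| = m ≥ 2, a : E → ℝ with a(e) ≥ 0 for all e and C = Σ_{e∈E} a(e) > 0. Let s ≥ 1 be an integer with s ≥ (m − 1)·ln(2/δ) / ((1 + ε)·ln(1 + ε) − ε), and let Y_1, …, Y_s : Ω → E be mutually independent random variables, each uniformly distributed on E. Define Ĉ = (1/s) · Σ_{j=1}^{s} m · a(Y_j). Then μ( |Ĉ − C| ≥ εC ) ≤ δ. -/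
/-!
The centred sample values `X j = m * a (Y j) - C` are independent, have mean zero, satisfy
`|X j| ≤ b := (m - 1) * C` and have second moment at most `v := (m - 1) * C ^ 2`. Bennett's
inequality bounds each tail of `∑ j, X j` at `s * ε * C` by `exp (-(s / (m - 1)) * h ε)` with
`h u = (1 + u) * log (1 + u) - u`; the sample-size condition makes this at most `δ / 2`.
Bennett's inequality is Chernoff's bound combined with the pointwise estimate
`exp (t * x) ≤ 1 + t * x + x ^ 2 * (exp (t * b) - t * b - 1) / b ^ 2` for `x ≤ b`, `t ≥ 0`,
which holds because `(exp u - u - 1) / u ^ 2` is nondecreasing.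
-/

open MeasureTheory ProbabilityTheory Real Finset
open scoped Nat ENNReal

lemma hasSum_exp_sub_sub_one (u : ℝ) :
    HasSum (fun n : ℕ => u ^ (n + 2) / (n + 2)!) (exp u - u - 1) := by
  have h := (hasSum_nat_add_iff' 2).mpr (NormedSpace.expSeries_div_hasSum_exp u)
  have h2 : ∑ i ∈ range 2, u ^ i / (i ! : ℝ) = 1 + u := by norm_num [sum_range_succ]
  rwa [← exp_eq_exp_ℝ, h2, sub_add_eq_sub_sub_swap] at h

lemma sq_mul_exp_sub_sub_one_le {u v : ℝ} (hu : 0 ≤ u) (huv : u ≤ v) :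
    v ^ 2 * (exp u - u - 1) ≤ u ^ 2 * (exp v - v - 1) := by
  refine hasSum_le (fun n => ?_) ((hasSum_exp_sub_sub_one u).mul_left (v ^ 2))
    ((hasSum_exp_sub_sub_one v).mul_left (u ^ 2))
  rw [mul_div_assoc', mul_div_assoc']
  refine div_le_div_of_nonneg_right ?_ (by positivity)
  calc v ^ 2 * u ^ (n + 2) = u ^ 2 * (v ^ 2 * u ^ n) := by ring
    _ ≤ u ^ 2 * (v ^ 2 * v ^ n) := by gcongr
    _ = u ^ 2 * v ^ (n + 2) := by ring

lemma exp_le_one_add_add_sq_div_two_of_nonpos {y : ℝ} (hy : y ≤ 0) :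
    exp y ≤ 1 + y + y ^ 2 / 2 := by
  have hmono : Monotone (fun y : ℝ => exp y - (1 + y + y ^ 2 / 2)) := by
    refine monotone_of_deriv_nonneg (by fun_prop) fun x => ?_
    have hd : HasDerivAt (fun y : ℝ => exp y - (1 + y + y ^ 2 / 2))
        (exp x - (1 + 2 * x ^ 1 / 2)) x :=
      (hasDerivAt_exp x).sub (((hasDerivAt_id x).const_add 1).add
        ((hasDerivAt_pow 2 x).div_const 2))
    rw [hd.deriv]
    linarith [add_one_le_exp x]
  simpa using hmono hy

lemma exp_mul_le_bennett {x b t : ℝ} (hx : x ≤ b) (hb : 0 < b) (ht : 0 ≤ t) :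
    exp (t * x) ≤ 1 + t * x + x ^ 2 * ((exp (t * b) - t * b - 1) / b ^ 2) := by
  suffices key : b ^ 2 * (exp (t * x) - t * x - 1) ≤ x ^ 2 * (exp (t * b) - t * b - 1) by
    have hdiv : exp (t * x) - t * x - 1 ≤ x ^ 2 * ((exp (t * b) - t * b - 1) / b ^ 2) := by
      rw [← mul_div_assoc, le_div_iff₀ (by positivity)]
      linarith
    linarith
  rcases le_or_gt x 0 with hx0 | hx0
  · have hneg : exp (t * x) - t * x - 1 ≤ (t * x) ^ 2 / 2 := by
      linarith [exp_le_one_add_add_sq_div_two_of_nonpos (mul_nonpos_of_nonneg_of_nonpos ht hx0)]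
    have hpos : (t * b) ^ 2 / 2 ≤ exp (t * b) - t * b - 1 := by
      linarith [quadratic_le_exp_of_nonneg (mul_nonneg ht hb.le)]
    calc b ^ 2 * (exp (t * x) - t * x - 1) ≤ b ^ 2 * ((t * x) ^ 2 / 2) := by gcongr
      _ = x ^ 2 * ((t * b) ^ 2 / 2) := by ring
      _ ≤ x ^ 2 * (exp (t * b) - t * b - 1) := by gcongr
  · rcases ht.eq_or_lt with rfl | ht
    · simp
    have h := sq_mul_exp_sub_sub_one_le (mul_nonneg ht.le hx0.le)
      (mul_le_mul_of_nonneg_left hx ht.le)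
    refine le_of_mul_le_mul_left ?_ (pow_pos ht 2)
    linarith

lemma one_add_mul_log_one_add_sub_pos {u : ℝ} (hu : 0 < u) : 0 < (1 + u) * log (1 + u) - u := by
  have h := log_lt_sub_one_of_pos (inv_pos.2 (by linarith : 0 < 1 + u))
    (inv_ne_one.2 (by linarith))
  rw [log_inv] at h
  have : (1 + u) * (1 + u)⁻¹ = 1 := mul_inv_cancel₀ (by linarith)
  nlinarith

lemma two_mul_exp_neg_le {δ x : ℝ} (hδ : 0 < δ) (hx : log (2 / δ) ≤ x) :
    2 * exp (-x) ≤ δ := by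
  have : exp (-x) ≤ δ / 2 := by
    calc exp (-x) ≤ exp (-log (2 / δ)) := exp_le_exp.2 (neg_le_neg hx)
      _ = δ / 2 := by rw [exp_neg, exp_log (by positivity), inv_div]
  linarith

section Bennett

variable {Ω : Type*} [MeasurableSpace Ω] {μ : Measure Ω}

lemma integrable_exp_mul_of_ae_le [IsFiniteMeasure μ] {X : Ω → ℝ} {b t : ℝ}
    (hX : AEStronglyMeasurable X μ) (hXb : ∀ᵐ ω ∂μ, X ω ≤ b) (ht : 0 ≤ t) :
    Integrable (fun ω => exp (t * X ω)) μ := by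
  refine (integrable_const (exp (t * b))).mono' ?_ ?_
  · exact continuous_exp.comp_aestronglyMeasurable (hX.const_mul t)
  · filter_upwards [hXb] with ω hω
    rw [norm_of_nonneg (exp_pos _).le, exp_le_exp]
    exact mul_le_mul_of_nonneg_left hω ht

variable [IsProbabilityMeasure μ]

lemma mgf_le_exp_bennett {X : Ω → ℝ} {b v t : ℝ} (hX : MemLp X 2 μ) (hb : 0 < b)
    (hXb : ∀ᵐ ω ∂μ, X ω ≤ b) (hmean : μ[X] = 0) (hvar : μ[X ^ 2] ≤ v) (ht : 0 ≤ t) :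
    mgf X μ t ≤ exp (v * ((exp (t * b) - t * b - 1) / b ^ 2)) := by
  set c := (exp (t * b) - t * b - 1) / b ^ 2
  have hc : 0 ≤ c := div_nonneg (by linarith [add_one_le_exp (t * b)]) (by positivity)
  have hXint : Integrable X μ := hX.integrable one_le_two
  have hlin : Integrable (fun ω => 1 + t * X ω) μ :=
    (integrable_const 1).add (hXint.const_mul t)
  have hquad : Integrable (fun ω => X ω ^ 2 * c) μ := hX.integrable_sq.mul_const c
  calc mgf X μ t ≤ ∫ ω, (1 + t * X ω + X ω ^ 2 * c) ∂μ :=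
        integral_mono_ae (integrable_exp_mul_of_ae_le hX.1 hXb ht) (hlin.add hquad)
          (hXb.mono fun ω hω => exp_mul_le_bennett hω hb ht)
    _ = 1 + t * μ[X] + μ[X ^ 2] * c := by
        rw [integral_add hlin hquad, integral_add (integrable_const 1) (hXint.const_mul t),
          integral_const_mul, integral_mul_const]
        simp [Pi.pow_apply]
    _ ≤ 1 + v * c := by rw [hmean]; nlinarith
    _ ≤ exp (v * c) := by linarith [add_one_le_exp (v * c)]

variable {ι : Type*} {X : ι → Ω → ℝ} {b v : ℝ}

lemma measure_sum_ge_le_exp_bennett (s : Finset ι) (hindep : iIndepFun X μ)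
    (hX : ∀ i, MemLp (X i) 2 μ) (hb : 0 < b) (hXb : ∀ i, ∀ᵐ ω ∂μ, X i ω ≤ b)
    (hmean : ∀ i, μ[X i] = 0) (hvar : ∀ i, μ[X i ^ 2] ≤ v) {t : ℝ} (ht : 0 ≤ t)
    (A : ℝ) :
    μ.real {ω | A ≤ ∑ i ∈ s, X i ω} ≤
      exp (-t * A + #s * (v * ((exp (t * b) - t * b - 1) / b ^ 2))) := by
  have hsum_le : ∀ᵐ ω ∂μ, (∑ i ∈ s, X i) ω ≤ #s * b := by
    filter_upwards [(Filter.eventually_all_finset s).2 fun i _ => hXb i] with ω hω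
    simpa [Finset.sum_apply] using Finset.sum_le_sum hω
  have hint := integrable_exp_mul_of_ae_le
    (Finset.aestronglyMeasurable_sum s fun i _ => (hX i).1) hsum_le ht
  have hmgf :
      mgf (∑ i ∈ s, X i) μ t ≤ exp (v * ((exp (t * b) - t * b - 1) / b ^ 2)) ^ #s := by
    rw [hindep.mgf_sum₀ (fun i => (hX i).1.aemeasurable), ← Finset.prod_const]
    exact Finset.prod_le_prod (fun i _ => mgf_nonneg)
      fun i _ => mgf_le_exp_bennett (hX i) hb (hXb i) (hmean i) (hvar i) ht
  calc μ.real {ω | A ≤ ∑ i ∈ s, X i ω} = μ.real {ω | A ≤ (∑ i ∈ s, X i) ω} := by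
        simp only [Finset.sum_apply]
    _ ≤ exp (-t * A) * mgf (∑ i ∈ s, X i) μ t := measure_ge_le_exp_mul_mgf A ht hint
    _ ≤ exp (-t * A) * exp (v * ((exp (t * b) - t * b - 1) / b ^ 2)) ^ #s := by gcongr
    _ = _ := by rw [← exp_nat_mul, ← exp_add]

theorem measure_sum_ge_le_bennett (s : Finset ι) (hindep : iIndepFun X μ)
    (hX : ∀ i, MemLp (X i) 2 μ) (hb : 0 < b) (hXb : ∀ i, ∀ᵐ ω ∂μ, X i ω ≤ b)
    (hmean : ∀ i, μ[X i] = 0) (hvar : ∀ i, μ[X i ^ 2] ≤ v) {u : ℝ} (hu : 0 ≤ u) :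
    μ.real {ω | #s * v * u / b ≤ ∑ i ∈ s, X i ω} ≤
      exp (-(#s * v / b ^ 2) * ((1 + u) * log (1 + u) - u)) := by
  -- `t = log (1 + u) / b` minimises the Chernoff exponent.
  have ht : 0 ≤ log (1 + u) / b := div_nonneg (log_nonneg (by linarith)) hb.le
  convert measure_sum_ge_le_exp_bennett s hindep hX hb hXb hmean hvar ht _ using 2
  rw [div_mul_cancel₀ _ hb.ne', exp_log (by linarith)]
  field_simp
  ring

theorem measure_abs_sum_ge_le_bennett (s : Finset ι) (hindep : iIndepFun X μ)
    (hX : ∀ i, MemLp (X i) 2 μ) (hb : 0 < b) (hXb : ∀ i, ∀ᵐ ω ∂μ, |X i ω| ≤ b)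
    (hmean : ∀ i, μ[X i] = 0) (hvar : ∀ i, μ[X i ^ 2] ≤ v) {u : ℝ} (hu : 0 ≤ u) :
    μ.real {ω | #s * v * u / b ≤ |∑ i ∈ s, X i ω|} ≤
      2 * exp (-(#s * v / b ^ 2) * ((1 + u) * log (1 + u) - u)) := by
  have upper := measure_sum_ge_le_bennett s hindep hX hb
    (fun i => (hXb i).mono fun ω h => (le_abs_self _).trans h) hmean hvar hu
  have lower := measure_sum_ge_le_bennett (X := fun i => -X i) s
    (hindep.comp (fun _ => Neg.neg) fun _ => measurable_neg) (fun i => (hX i).neg) hb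
    (fun i => (hXb i).mono fun ω h => (neg_le_abs _).trans h)
    (fun i => by simp [integral_neg, hmean i]) (fun i => by simpa [neg_sq] using hvar i) hu
  calc μ.real {ω | #s * v * u / b ≤ |∑ i ∈ s, X i ω|}
      ≤ μ.real ({ω | #s * v * u / b ≤ ∑ i ∈ s, X i ω} ∪
          {ω | #s * v * u / b ≤ ∑ i ∈ s, (-X i) ω}) := by
        refine measureReal_mono (fun ω hω => ?_)
        simpa [le_abs', Finset.sum_neg_distrib, le_neg, or_comm] using hω
    _ ≤ _ := (measureReal_union_le _ _).trans (by linarith)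

end Bennett

section UniformSample

variable {E : Type*} [Fintype E]

lemma abs_card_mul_sub_sum_le {a : E → ℝ} (ha : ∀ e, 0 ≤ a e) (hE : 2 ≤ Fintype.card E)
    (e : E) :
    |(Fintype.card E : ℝ) * a e - ∑ e, a e| ≤ ((Fintype.card E : ℝ) - 1) * ∑ e, a e := by
  have hle : a e ≤ ∑ e, a e := Finset.single_le_sum (fun e _ => ha e) (Finset.mem_univ e)
  have hE' : (2 : ℝ) ≤ Fintype.card E := by exact_mod_cast hE
  rw [abs_le]
  constructor <;> nlinarith [ha e]

variable {Ω : Type*} [MeasurableSpace Ω] {μ : Measure Ω}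
  [MeasurableSpace E] [MeasurableSingletonClass E] {Y : Ω → E}

lemma integral_comp_eq_of_uniform [IsFiniteMeasure μ] (hY : Measurable Y)
    (hunif : ∀ e, μ {ω | Y ω = e} = (Fintype.card E : ℝ≥0∞)⁻¹) (f : E → ℝ) :
    ∫ ω, f (Y ω) ∂μ = (Fintype.card E : ℝ)⁻¹ * ∑ e, f e := by
  rw [← integral_map hY.aemeasurable (measurable_of_finite f).aestronglyMeasurable,
    integral_fintype (.of_finite), Finset.mul_sum]
  refine Finset.sum_congr rfl fun e _ => ?_
  rw [measureReal_def, Measure.map_apply hY (measurableSet_singleton e), smul_eq_mul,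
    show Y ⁻¹' {e} = {ω | Y ω = e} from rfl, hunif]
  simp [ENNReal.toReal_inv]

lemma integral_card_mul_comp_sub_sum [IsFiniteMeasure μ] (hY : Measurable Y)
    (hunif : ∀ e, μ {ω | Y ω = e} = (Fintype.card E : ℝ≥0∞)⁻¹) (a : E → ℝ) :
    μ[fun ω => (Fintype.card E : ℝ) * a (Y ω) - ∑ e, a e] = 0 := by
  rw [integral_comp_eq_of_uniform hY hunif (fun e => (Fintype.card E : ℝ) * a e - ∑ e, a e)]
  simp [Finset.sum_sub_distrib, ← Finset.mul_sum]

lemma integral_sq_card_mul_comp_sub_sum_le [IsProbabilityMeasure μ] (hY : Measurable Y)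
    (hunif : ∀ e, μ {ω | Y ω = e} = (Fintype.card E : ℝ≥0∞)⁻¹) {a : E → ℝ}
    (ha : ∀ e, 0 ≤ a e) :
    μ[(fun ω => (Fintype.card E : ℝ) * a (Y ω) - ∑ e, a e) ^ 2] ≤
      ((Fintype.card E : ℝ) - 1) * (∑ e, a e) ^ 2 := by
  have : Nonempty E := ⟨Y (nonempty_of_isProbabilityMeasure μ).some⟩
  set m : ℝ := ((Fintype.card E : ℕ) : ℝ)
  set C := ∑ e, a e
  have hm : 0 < m := Nat.cast_pos.2 Fintype.card_pos
  have hsq : ∑ e, a e ^ 2 ≤ C ^ 2 := Finset.sum_sq_le_sq_sum_of_nonneg fun e _ => ha e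
  have hexpand : ∑ e, (m * a e - C) ^ 2 = m ^ 2 * ∑ e, a e ^ 2 - m * C ^ 2 := by
    have hterm : ∀ e, (m * a e - C) ^ 2 = m ^ 2 * a e ^ 2 - 2 * m * C * a e + C ^ 2 :=
      fun e => by ring
    simp only [hterm, Finset.sum_add_distrib, Finset.sum_sub_distrib, ← Finset.mul_sum,
      Finset.sum_const, Finset.card_univ, nsmul_eq_mul]
    ring
  rw [show (fun ω => m * a (Y ω) - C) ^ 2 = fun ω => (m * a (Y ω) - C) ^ 2 from rfl,
    integral_comp_eq_of_uniform hY hunif (fun e => (m * a e - C) ^ 2), hexpand,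
    inv_mul_le_iff₀ hm]
  nlinarith

theorem measure_abs_sum_card_mul_comp_sub_ge_le [IsProbabilityMeasure μ] {ι : Type*}
    (s : Finset ι) {Y : ι → Ω → E} (hY : ∀ i, Measurable (Y i))
    (hunif : ∀ i e, μ {ω | Y i ω = e} = (Fintype.card E : ℝ≥0∞)⁻¹) (hindep : iIndepFun Y μ)
    {a : E → ℝ} (ha : ∀ e, 0 ≤ a e) (hC : 0 < ∑ e, a e) (hE : 2 ≤ Fintype.card E)
    {ε : ℝ} (hε : 0 ≤ ε) :
    μ.real {ω | #s * (ε * ∑ e, a e) ≤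
        |∑ i ∈ s, ((Fintype.card E : ℝ) * a (Y i ω) - ∑ e, a e)|} ≤
      2 * exp (-(#s / ((Fintype.card E : ℝ) - 1) * ((1 + ε) * log (1 + ε) - ε))) := by
  have hm1 : (0 : ℝ) < Fintype.card E - 1 := by
    have : (2 : ℝ) ≤ Fintype.card E := by exact_mod_cast hE
    linarith
  set m : ℝ := ((Fintype.card E : ℕ) : ℝ)
  set C := ∑ e, a e
  have hg : Measurable fun e => m * a e - C := measurable_of_finite _
  have hb : ∀ i ω, |m * a (Y i ω) - C| ≤ (m - 1) * C :=
    fun i ω => abs_card_mul_sub_sum_le ha hE _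
  have h := measure_abs_sum_ge_le_bennett (X := fun i ω => m * a (Y i ω) - C)
    (b := (m - 1) * C) (v := (m - 1) * C ^ 2) s (hindep.comp (fun _ => _) fun _ => hg)
    (fun i => MemLp.of_bound (hg.comp (hY i)).aestronglyMeasurable _ (ae_of_all _ (hb i)))
    (by positivity) (fun i => ae_of_all _ (hb i))
    (fun i => integral_card_mul_comp_sub_sum (hY i) (hunif i) a)
    (fun i => integral_sq_card_mul_comp_sub_sum_le (hY i) (hunif i) ha) hε
  rwa [show #s * ((m - 1) * C ^ 2) * ε / ((m - 1) * C) = #s * (ε * C) by field_simp,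
    show #s * ((m - 1) * C ^ 2) / ((m - 1) * C) ^ 2 = #s / (m - 1) by field_simp,
    neg_mul] at h

end UniformSample

lemma card_mul_le_abs_sum_sub {n : ℕ} (hn : 0 < n) {x : Fin n → ℝ} {c C : ℝ}
    (h : c ≤ |1 / (n : ℝ) * ∑ j, x j - C|) : n * c ≤ |∑ j, (x j - C)| := by
  have hn' : (0 : ℝ) < n := by exact_mod_cast hn
  have hsum : ∑ j, (x j - C) = n * (1 / (n : ℝ) * ∑ j, x j - C) := by
    rw [Finset.sum_sub_distrib, Finset.sum_const, Finset.card_univ, Fintype.card_fin,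
      nsmul_eq_mul]
    field_simp
  rw [hsum, abs_mul, abs_of_pos hn']
  gcongr

theorem stmt_9_general {Ω : Type*} [MeasurableSpace Ω] (μ : Measure Ω) [IsProbabilityMeasure μ]
    (ε δ : ℝ) (hε : ε ∈ Set.Ioo (0 : ℝ) 1) (hδ : δ ∈ Set.Ioo (0 : ℝ) 1)
    {E : Type*} [Fintype E] [MeasurableSpace E] [MeasurableSingletonClass E]
    (m : ℕ) (hm : m = Fintype.card E) (hm2 : 2 ≤ m)
    (a : E → ℝ) (ha : ∀ e, 0 ≤ a e)
    (C : ℝ) (hC : C = ∑ e, a e) (hCpos : 0 < C)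
    (s : ℕ)
    (hslb : ((m : ℝ) - 1) * Real.log (2 / δ) / ((1 + ε) * Real.log (1 + ε) - ε) ≤ (s : ℝ))
    (Y : Fin s → Ω → E) (hmeas : ∀ j, Measurable (Y j))
    (hunif : ∀ j e, μ {ω | Y j ω = e} = (m : ENNReal)⁻¹)
    (hindep : iIndepFun Y μ) :
    μ {ω | ε * C ≤ |(1 / (s : ℝ)) * (∑ j, (m : ℝ) * a (Y j ω)) - C|}
      ≤ ENNReal.ofReal δ := by
  obtain ⟨hε0, -⟩ := hε
  obtain ⟨hδ0, hδ1⟩ := hδ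
  have hm1 : (0 : ℝ) < m - 1 := by
    have : (2 : ℝ) ≤ m := by exact_mod_cast hm2
    linarith
  have hh := one_add_mul_log_one_add_sub_pos hε0
  have hs : 0 < s := by
    have hlog : 0 < log (2 / δ) := log_pos (by rw [lt_div_iff₀ hδ0]; linarith)
    exact_mod_cast (div_pos (mul_pos hm1 hlog) hh).trans_le hslb
  have hrate : log (2 / δ) ≤ s / ((m : ℝ) - 1) * ((1 + ε) * log (1 + ε) - ε) := by
    rw [div_le_iff₀ hh] at hslb
    rw [div_mul_eq_mul_div, le_div_iff₀ hm1]
    linarith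
  subst hm hC
  rw [ENNReal.le_ofReal_iff_toReal_le (measure_ne_top _ _) hδ0.le]
  calc μ.real _ ≤ μ.real {ω | s * (ε * ∑ e, a e) ≤
          |∑ j, ((Fintype.card E : ℝ) * a (Y j ω) - ∑ e, a e)|} :=
        measureReal_mono fun ω hω => card_mul_le_abs_sum_sub hs hω
    _ ≤ 2 * exp (-(s / ((Fintype.card E : ℝ) - 1) * ((1 + ε) * log (1 + ε) - ε))) := by
        simpa using measure_abs_sum_card_mul_comp_sub_ge_le univ hmeas hunif hindep ha hCpos hm2
          hε0.le
    _ ≤ δ := two_mul_exp_neg_le hδ0 hrate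

/-- Theorem 4.3, second part: Bennett-based sample-size bound for TBC-I. With
`s ≥ (m - 1)·ln(2/δ) / ((1 + ε)·ln(1 + ε) − ε)` uniform samples, the estimator is an
(ε, δ)-approximation of `C`. -/
theorem stmt_9 {Ω : Type*} [MeasurableSpace Ω] (μ : Measure Ω) [IsProbabilityMeasure μ]
    (ε δ : ℝ) (hε : ε ∈ Set.Ioo (0 : ℝ) 1) (hδ : δ ∈ Set.Ioo (0 : ℝ) 1)
    {E : Type*} [Fintype E] [MeasurableSpace E] [MeasurableSingletonClass E]
    (m : ℕ) (hm : m = Fintype.card E) (hm2 : 2 ≤ m)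
    (a : E → ℝ) (ha : ∀ e, 0 ≤ a e)
    (C : ℝ) (hC : C = ∑ e, a e) (hCpos : 0 < C)
    (s : ℕ) (hs : 1 ≤ s)
    (hslb : ((m : ℝ) - 1) * Real.log (2 / δ) / ((1 + ε) * Real.log (1 + ε) - ε) ≤ (s : ℝ))
    (Y : Fin s → Ω → E) (hmeas : ∀ j, Measurable (Y j))
    (hunif : ∀ j e, μ {ω | Y j ω = e} = (m : ENNReal)⁻¹)
    (hindep : iIndepFun Y μ) :
    μ {ω | ε * C ≤ |(1 / (s : ℝ)) * (∑ j, (m : ℝ) * a (Y j ω)) - C|}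
      ≤ ENNReal.ofReal δ :=
  stmt_9_general μ ε δ hε hδ m hm hm2 a ha C hC hCpos s hslb Y hmeas hunif hindep
end
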